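/- arXiv:2302.14860 — 3 statements merged into one kernel-verified Lean document; each statement's English description precedes it below -/
import Mathlib

section
/- Let n ∈ ℕ and let q ≥ 2 be a prime modulus with m ≥ 2n·log₂(q). Then for all but at most a q^(−n) fraction of matrices A ∈ ℤ_q^(n×m), the columns of A generate ℤ_q^n as an additive group; equivalently, if A is drawn uniformly at random from ℤ_q^(n×m), then the probability that the columns of A do not generate ℤ_q^n is at most q^(−n). -/
/-!
If the columns of `A` do not generate `ℤ_q^n`, they span a proper subspace (over the field `ℤ_q`
additive subgroups are subspaces), so `yᵀ A = 0` for some `y ≠ 0`. For fixed `y ≠ 0` the linear map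
`A ↦ yᵀ A` onto `ℤ_q^m` is surjective, so exactly `q^(nm - m)` matrices satisfy `yᵀ A = 0`.
A union bound over the fewer than `q^n` vectors `y` bounds the fraction of bad matrices by
`q^(n - m)`, which is at most `q^(-n)` because `log₂ q ≥ 1` forces `m ≥ 2n`.
-/

theorem AddMonoidHom.card_ker_mul_card_of_surjective {G H : Type*} [AddGroup G] [AddGroup H]
    (f : G →+ H) (hf : Function.Surjective f) : Nat.card f.ker * Nat.card H = Nat.card G := by
  rw [← AddSubgroup.card_mul_index f.ker, AddSubgroup.index_ker, f.range_eq_top.mpr hf,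
    AddSubgroup.card_top]

theorem AddSubgroup.toZModSubmodule_closure {n : ℕ} {M : Type*} [AddCommGroup M]
    [Module (ZMod n) M] (s : Set M) :
    toZModSubmodule n (closure s) = Submodule.span (ZMod n) s :=
  le_antisymm (fun _ hx => (closure_le (Submodule.span (ZMod n) s).toAddSubgroup).mpr
      Submodule.subset_span hx)
    (Submodule.span_le.mpr subset_closure)

theorem AddSubgroup.closure_eq_top_iff_span_eq_top {n : ℕ} {M : Type*} [AddCommGroup M]
    [Module (ZMod n) M] (s : Set M) :
    closure s = ⊤ ↔ Submodule.span (ZMod n) s = ⊤ := by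
  rw [← toZModSubmodule_closure, map_eq_top_iff]

namespace Matrix

open Finset

variable {K m n : Type*} [Field K] [Fintype m]

theorem exists_ne_zero_vecMul_eq_zero_of_span_col_ne_top (A : Matrix m n K)
    (h : Submodule.span K (Set.range A.col) ≠ ⊤) : ∃ y ≠ 0, y ᵥ* A = 0 := by
  classical
  obtain ⟨f, hf0, hspan⟩ := (Submodule.span K (Set.range A.col)).exists_le_ker_of_lt_top h.lt_top
  set y := (dotProductEquiv K m).symm f
  have hy : ∀ v, y ⬝ᵥ v = f v := fun v => by
    rw [← dotProductEquiv_apply_apply, LinearEquiv.apply_symm_apply]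
  refine ⟨y, fun hy0 => hf0 (LinearMap.ext fun v => by simp [← hy, hy0]), funext fun j => ?_⟩
  exact (hy (A.col j)).trans (hspan (Submodule.subset_span ⟨j, rfl⟩))

theorem vecMul_surjective_of_ne_zero {y : m → K} (hy : y ≠ 0) :
    Function.Surjective fun A : Matrix m n K => y ᵥ* A := by
  classical
  obtain ⟨i, hi⟩ : ∃ i, y i ≠ 0 := Function.ne_iff.mp hy
  intro w
  refine ⟨vecMulVec (Pi.single i (y i)⁻¹) w, ?_⟩
  simp [vecMul_vecMulVec, dotProduct_single, hi]

variable [Fintype n] [Fintype K] [DecidableEq m] [DecidableEq n] [DecidableEq K]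

theorem card_filter_vecMul_eq_zero_mul_card {y : m → K} (hy : y ≠ 0) :
    #{A : Matrix m n K | y ᵥ* A = 0} * Fintype.card (n → K) = Fintype.card (Matrix m n K) := by
  have := AddMonoidHom.card_ker_mul_card_of_surjective
    (vecMulBilin K K y : Matrix m n K →ₗ[K] n → K).toAddMonoidHom (vecMul_surjective_of_ne_zero hy)
  simpa [Nat.card_eq_fintype_card, Fintype.card_subtype] using this

open scoped Classical in
theorem card_filter_span_col_ne_top_mul_le :
    #{A : Matrix m n K | Submodule.span K (Set.range A.col) ≠ ⊤} * Fintype.card (n → K) ≤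
      Fintype.card (m → K) * Fintype.card (Matrix m n K) := by
  have hcover : ({A | Submodule.span K (Set.range A.col) ≠ ⊤} : Finset (Matrix m n K)) ⊆
      ({y | y ≠ 0} : Finset (m → K)).biUnion fun y => {A | y ᵥ* A = 0} := fun A hA => by
    obtain ⟨y, hy, hyA⟩ := exists_ne_zero_vecMul_eq_zero_of_span_col_ne_top A (mem_filter.mp hA).2
    exact mem_biUnion.mpr ⟨y, by simpa using hy, by simpa using hyA⟩
  calc #{A : Matrix m n K | Submodule.span K (Set.range A.col) ≠ ⊤} * Fintype.card (n → K)
      ≤ (∑ y ∈ ({y | y ≠ 0} : Finset (m → K)), #{A : Matrix m n K | y ᵥ* A = 0}) *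
          Fintype.card (n → K) := by
        gcongr
        exact (card_le_card hcover).trans card_biUnion_le
    _ = #({y | y ≠ 0} : Finset (m → K)) * Fintype.card (Matrix m n K) := by
        rw [sum_mul, ← smul_eq_mul, ← sum_const]
        exact sum_congr rfl fun y hy => card_filter_vecMul_eq_zero_mul_card (mem_filter.mp hy).2
    _ ≤ Fintype.card (m → K) * Fintype.card (Matrix m n K) := by
        gcongr
        exact card_filter_le _ _

end Matrix

open scoped Classical

/-- For a prime modulus `q` and `m ≥ 2n·log₂ q`, all but at most a `q^(-n)`
fraction of matrices `A ∈ ℤ_q^(n×m)` have columns generating `ℤ_q^n` as an additive group: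
the number of matrices whose columns fail to generate is at most `q^(-n)` times the total
number of matrices. -/
theorem stmt_0 (n m q : ℕ) [Fact (Nat.Prime q)]
    (hm : (m : ℝ) ≥ 2 * n * Real.logb 2 q) :
    ((Finset.univ.filter (fun A : Matrix (Fin n) (Fin m) (ZMod q) =>
        AddSubgroup.closure (Set.range fun j : Fin m => fun i : Fin n => A i j)
          ≠ (⊤ : AddSubgroup (Fin n → ZMod q)))).card : ℝ)
      ≤ (q : ℝ) ^ (-(n : ℤ)) * (Fintype.card (Matrix (Fin n) (Fin m) (ZMod q)) : ℝ) := by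
  have hq : (2 : ℝ) ≤ q := mod_cast (Fact.out : q.Prime).two_le
  have h2n : 2 * n ≤ m := by
    have : 1 ≤ Real.logb 2 q := by
      rw [← Real.logb_self_eq_one (b := 2) (by norm_num)]
      exact Real.logb_le_logb_of_le (by norm_num) (by norm_num) hq
    exact_mod_cast (show ((2 * n : ℕ) : ℝ) ≤ m by push_cast; nlinarith)
  set N := Fintype.card (Matrix (Fin n) (Fin m) (ZMod q))
  set B := (Finset.univ.filter (fun A : Matrix (Fin n) (Fin m) (ZMod q) =>
        AddSubgroup.closure (Set.range fun j : Fin m => fun i : Fin n => A i j)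
          ≠ (⊤ : AddSubgroup (Fin n → ZMod q)))).card
  have hB : B * q ^ m ≤ q ^ n * N := by
    have hcount := Matrix.card_filter_span_col_ne_top_mul_le (K := ZMod q) (m := Fin n) (n := Fin m)
    simp only [Fintype.card_fun, ZMod.card, Fintype.card_fin] at hcount
    refine le_trans (Nat.mul_le_mul_right _ (Finset.card_le_card fun A hA => ?_)) hcount
    simp only [Finset.mem_filter, Finset.mem_univ, true_and] at hA ⊢
    exact (AddSubgroup.closure_eq_top_iff_span_eq_top _).not.mp hA
  rw [zpow_neg, zpow_natCast, inv_mul_eq_div, le_div_iff₀ (by positivity)]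
  refine le_of_mul_le_mul_right ?_ (by positivity : (0 : ℝ) < q ^ n)
  calc (B : ℝ) * q ^ n * q ^ n = B * q ^ (2 * n) := by ring
    _ ≤ B * q ^ m := by gcongr; linarith
    _ ≤ q ^ n * N := mod_cast hB
    _ = N * q ^ n := mul_comm _ _
end

section
/- For every constant c > 0 there exists M ∈ ℕ such that for all m ≥ M, all q ∈ ℕ with q ≥ 2, and all σ ∈ (√(2m), q/√(2m)), it holds that (Σ_{x ∈ ℤ_q^m, ‖x‖ > σ√(m/2)} ρ_σ(x)²) / (Σ_{x ∈ ℤ_q^m} ρ_σ(x)²) ≤ m^(−c). Consequently, the normalized vector ψ = Σ_{x ∈ ℤ_q^m} ρ_σ(x)|x⟩ / ‖·‖₂ in ℂ^(ℤ_q^m) is within negligible (in m) trace distance of its truncation to the support {x ∈ ℤ_q^m : ‖x‖ ≤ σ√(m/2)}. -/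
open scoped Classical

/-- The Gaussian measure `ρ_σ(x) = exp(-π‖x‖²/σ²)` on `ℝ^m`. -/
noncomputable def rho {m : ℕ} (σ : ℝ) (x : Fin m → ℝ) : ℝ :=
  Real.exp (-Real.pi * (∑ i, (x i) ^ 2) / σ ^ 2)

/-- The canonical representative of `x ∈ ℤ_q^m` in `ℤ^m ∩ (-q/2, q/2]^m`, as a real vector. -/
noncomputable def zrep {q m : ℕ} [NeZero q] (x : Fin m → ZMod q) : Fin m → ℝ :=
  fun i => ((x i).valMinAbs : ℝ)

/-- The amplitudes of the truncation of the Gaussian state `Σ_x ρ_σ(x)|x⟩` to the support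
`{x ∈ ℤ_q^m : ‖x‖ ≤ σ√(m/2)}`. -/
noncomputable def psiTrunc {q m : ℕ} [NeZero q] (σ : ℝ) (x : Fin m → ZMod q) : ℝ :=
  if Real.sqrt (∑ i, (zrep x i) ^ 2) ≤ σ * Real.sqrt ((m : ℝ) / 2)
  then rho σ (zrep x) else 0

/-!
Both sums factor over the `m` coordinates into powers of the one-dimensional theta sums
`θ(b) = Σ_{v ∈ ℤ_q} e^{-b v²}`; the denominator is `θ(2π/σ²)^m`. On the tail `‖x‖² > σ² m/2`, hence
`ρ_σ(x)² ≤ e^{-πm/2} ρ_σ(x)` and the numerator is at most `(e^{-π/2} θ(π/σ²))^m`.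
Comparison with the Gaussian integral gives `θ(π/σ²) ≤ 2 + σ`, and the `2⌊σ/4⌋ + 1` central
residues (distinct because `σ < q`) give `θ(2π/σ²) ≥ (σ/2 - 1) e^{-π/8}`. For `σ ≥ 50` the ratio
is therefore at most `(4/5)^m`, which is eventually below every `m^{-c}`. For the truncation `ψ'`
of `ψ` one has `⟨ψ, ψ'⟩ = ‖ψ'‖²`, so the squared trace distance `1 - ⟨ψ, ψ'⟩² / (‖ψ‖² ‖ψ'‖²)`
is exactly that ratio.
-/

open Finset Real

lemma sum_range_exp_neg_mul_sq_le {b : ℝ} (hb : 0 < b) (n : ℕ) :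
    ∑ i ∈ range (n + 1), exp (-b * (i : ℝ) ^ 2) ≤ 1 + √(π / b) / 2 := by
  set g : ℝ → ℝ := fun t => exp (-b * t ^ 2)
  have hg : AntitoneOn g (Set.Icc 0 (0 + n)) := fun s hs t _ hst =>
    exp_le_exp.2 (by nlinarith [mul_le_mul_of_nonneg_left (pow_le_pow_left₀ hs.1 hst 2) hb.le])
  have hint : ∫ t in (0 : ℝ)..(0 + n), g t ≤ ∫ t in Set.Ioi (0 : ℝ), g t := by
    rw [zero_add, intervalIntegral.integral_of_le n.cast_nonneg]
    exact MeasureTheory.setIntegral_mono_set (integrable_exp_neg_mul_sq hb).integrableOn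
      (.of_forall fun t => (exp_pos _).le) (.of_forall fun t ht => ht.1)
  -- the terms with `i ≥ 1` are bounded by the Gaussian integral over `(0, ∞)`
  have htail := (hg.sum_le_integral.trans hint).trans_eq (integral_gaussian_Ioi b)
  rw [sum_range_succ', add_comm]
  simpa [g] using htail

lemma sum_natAbs_valMinAbs_le {q : ℕ} [NeZero q] (G : ℕ → ℝ) (hG : ∀ n, 0 ≤ G n) :
    ∑ v : ZMod q, G v.valMinAbs.natAbs ≤ 2 * ∑ n ∈ range (q / 2 + 1), G n := by
  -- `valMinAbs` is injective, so each fibre of `natAbs ∘ valMinAbs` lies in `{n, -n}`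
  have hfiber (n : ℕ) : #{v : ZMod q | v.valMinAbs.natAbs = n} ≤ 2 := by
    refine (card_le_card_of_injOn ZMod.valMinAbs (t := {(n : ℤ), -(n : ℤ)}) ?_
      (ZMod.injective_valMinAbs.injOn)).trans card_le_two
    intro v hv
    obtain rfl : v.valMinAbs.natAbs = n := by simpa using hv
    rcases abs_choice v.valMinAbs with h | h <;> simp [h]
  have himage : univ.image (fun v : ZMod q => v.valMinAbs.natAbs) ⊆ range (q / 2 + 1) := by
    intro n hn
    obtain ⟨v, -, rfl⟩ := mem_image.1 hn
    exact mem_range_succ_iff.2 (ZMod.natAbs_valMinAbs_le v)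
  rw [sum_comp, mul_sum]
  calc _ ≤ ∑ n ∈ univ.image (fun v : ZMod q => v.valMinAbs.natAbs), 2 * G n :=
        sum_le_sum fun n _ => by
          rw [nsmul_eq_mul]
          exact mul_le_mul_of_nonneg_right (by exact_mod_cast hfiber n) (hG n)
    _ ≤ _ := sum_le_sum_of_subset_of_nonneg himage fun n _ _ => by linarith [hG n]

lemma sum_Icc_le_sum_valMinAbs {q n : ℕ} [NeZero q] (hn : 2 * n < q) (g : ℤ → ℝ)
    (hg : ∀ k, 0 ≤ g k) : ∑ k ∈ Icc (-(n : ℤ)) n, g k ≤ ∑ v : ZMod q, g v.valMinAbs := by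
  have hsub : Icc (-(n : ℤ)) n ⊆ univ.image (ZMod.valMinAbs : ZMod q → ℤ) := by
    intro k hk
    rw [mem_Icc] at hk
    refine mem_image.2 ⟨(k : ZMod q), mem_univ _,
      (ZMod.valMinAbs_spec (k : ZMod q) k).2 ⟨rfl, ?_, ?_⟩⟩ <;> omega
  rw [← sum_image fun x _ y _ h => ZMod.injective_valMinAbs h]
  exact sum_le_sum_of_subset_of_nonneg hsub fun k _ _ => hg k

noncomputable def zmodGaussSum (q : ℕ) [NeZero q] (b : ℝ) : ℝ :=
  ∑ v : ZMod q, exp (-b * (v.valMinAbs : ℝ) ^ 2)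

lemma zmodGaussSum_le {q : ℕ} [NeZero q] {b : ℝ} (hb : 0 < b) :
    zmodGaussSum q b ≤ 2 + √(π / b) := by
  have h := sum_natAbs_valMinAbs_le (q := q) (fun n => exp (-b * (n : ℝ) ^ 2))
    fun n => (exp_pos _).le
  simp only [Nat.cast_natAbs, Int.cast_abs, sq_abs] at h
  unfold zmodGaussSum
  linarith [sum_range_exp_neg_mul_sq_le hb (q / 2)]

lemma le_zmodGaussSum {q n : ℕ} [NeZero q] {b : ℝ} (hb : 0 ≤ b) (hn : 2 * n < q) :
    (2 * n + 1) * exp (-b * (n : ℝ) ^ 2) ≤ zmodGaussSum q b := by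
  have hcard : #(Icc (-(n : ℤ)) n) = 2 * n + 1 := by
    rw [Int.card_Icc]; omega
  calc (2 * n + 1) * exp (-b * (n : ℝ) ^ 2)
        = ∑ _k ∈ Icc (-(n : ℤ)) n, exp (-b * (n : ℝ) ^ 2) := by
        rw [sum_const, nsmul_eq_mul, hcard]; push_cast; ring
    _ ≤ ∑ k ∈ Icc (-(n : ℤ)) n, exp (-b * (k : ℝ) ^ 2) := by
        refine sum_le_sum fun k hk => exp_le_exp.2 ?_
        rw [mem_Icc] at hk
        have hk2 : (k : ℝ) ^ 2 ≤ (n : ℝ) ^ 2 :=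
          sq_le_sq' (by exact_mod_cast hk.1) (by exact_mod_cast hk.2)
        nlinarith
    _ ≤ zmodGaussSum q b := sum_Icc_le_sum_valMinAbs hn _ fun k => (exp_pos _).le

lemma exp_neg_pi_div_two_mul_zmodGaussSum_le {q : ℕ} [NeZero q] {σ : ℝ} (hσ : 50 ≤ σ)
    (hσq : σ < q) :
    exp (-(π / 2)) * zmodGaussSum q (π / σ ^ 2) ≤ 4 / 5 * zmodGaussSum q (2 * π / σ ^ 2) := by
  have hσ0 : 0 < σ := by linarith
  have hA : zmodGaussSum q (π / σ ^ 2) ≤ 2 + σ := by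
    have h := zmodGaussSum_le (q := q) (b := π / σ ^ 2) (by positivity)
    rwa [div_div_cancel₀ pi_ne_zero, sqrt_sq hσ0.le] at h
  -- lower bound from the `2n + 1` central terms, `n = ⌊σ/4⌋`, each at least `e^{-π/8}`
  set n := ⌊σ / 4⌋₊
  have hn_le : (n : ℝ) ≤ σ / 4 := Nat.floor_le (by positivity)
  have hn_gt : σ / 4 < n + 1 := Nat.lt_floor_add_one _
  have hB : (σ / 2 - 1) * exp (-(π / 8)) ≤ zmodGaussSum q (2 * π / σ ^ 2) := by
    have h2n : 2 * n < q := by exact_mod_cast (show (2 * n : ℝ) < q by linarith)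
    refine le_trans (mul_le_mul (by linarith) (exp_le_exp.2 ?_) (exp_pos _).le (by positivity))
      (le_zmodGaussSum (by positivity) h2n)
    rw [neg_mul, neg_le_neg_iff, div_mul_eq_mul_div, div_le_iff₀ (by positivity)]
    nlinarith [pow_le_pow_left₀ n.cast_nonneg hn_le 2, pi_pos]
  have hexp : exp (-(π / 2)) * exp (3 * π / 8) = exp (-(π / 8)) := by
    rw [← exp_add]; ring_nf
  have hE : 11 / 4 ≤ exp (3 * π / 8) := by
    have hx : 9 / 8 ≤ 3 * π / 8 := by linarith [pi_gt_three]
    nlinarith [quadratic_le_exp_of_nonneg (x := 3 * π / 8) (by positivity)]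
  calc exp (-(π / 2)) * zmodGaussSum q (π / σ ^ 2)
      ≤ exp (-(π / 2)) * (2 + σ) := mul_le_mul_of_nonneg_left hA (exp_pos _).le
    _ ≤ exp (-(π / 2)) * (4 / 5 * (σ / 2 - 1) * exp (3 * π / 8)) := by
        -- `(4/5) · (11/4) = 11/5 > 2`, which wins for `σ ≥ 42`
        gcongr
        nlinarith [mul_le_mul_of_nonneg_left hE (show 0 ≤ σ / 2 - 1 by linarith)]
    _ = 4 / 5 * ((σ / 2 - 1) * exp (-(π / 8))) := by rw [← hexp]; ring
    _ ≤ 4 / 5 * zmodGaussSum q (2 * π / σ ^ 2) := by gcongr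

lemma rho_eq_exp {n : ℕ} (σ : ℝ) (y : Fin n → ℝ) :
    rho σ y = exp (-(π / σ ^ 2) * ∑ i, y i ^ 2) := by
  rw [rho]; ring_nf

lemma rho_sq_eq_exp {n : ℕ} (σ : ℝ) (y : Fin n → ℝ) :
    rho σ y ^ 2 = exp (-(2 * π / σ ^ 2) * ∑ i, y i ^ 2) := by
  rw [rho, ← exp_nat_mul]; ring_nf

lemma sum_exp_neg_mul_sum_zrep_sq (q m : ℕ) [NeZero q] (b : ℝ) :
    ∑ x : Fin m → ZMod q, exp (-b * ∑ i, zrep x i ^ 2) = zmodGaussSum q b ^ m := by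
  simp only [mul_sum, exp_sum, zmodGaussSum, zrep]
  rw [← Fin.prod_const, Fintype.prod_sum]

lemma rho_sq_le_exp_mul_rho {n : ℕ} {σ t : ℝ} (hσ : 0 < σ) (ht : 0 ≤ t) {y : Fin n → ℝ}
    (hy : σ * √t < √(∑ i, y i ^ 2)) : rho σ y ^ 2 ≤ exp (-π * t) * rho σ y := by
  have hN : σ ^ 2 * t < ∑ i, y i ^ 2 := by
    rw [← sqrt_lt_sqrt_iff (by positivity), sqrt_mul (by positivity), sqrt_sq hσ.le]
    exact hy
  rw [sq]
  refine mul_le_mul_of_nonneg_right ?_ (exp_pos _).le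
  rw [rho_eq_exp, exp_le_exp, neg_mul, neg_mul, neg_le_neg_iff, div_mul_eq_mul_div,
    le_div_iff₀ (by positivity)]
  nlinarith [pi_pos]

lemma sum_tail_rho_sq_div_le {q m : ℕ} [NeZero q] {σ : ℝ} (hσ : 50 ≤ σ) (hσq : σ < q) :
    (∑ x : Fin m → ZMod q,
        if σ * √((m : ℝ) / 2) < √(∑ i, zrep x i ^ 2) then rho σ (zrep x) ^ 2 else 0) /
      (∑ x : Fin m → ZMod q, rho σ (zrep x) ^ 2) ≤ (4 / 5) ^ m := by
  refine div_le_of_le_mul₀ (sum_nonneg fun _ _ => sq_nonneg _) (by positivity) ?_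
  calc _ ≤ ∑ x : Fin m → ZMod q, exp (-π * (m / 2)) * rho σ (zrep x) := by
        refine sum_le_sum fun x _ => ?_
        split_ifs with h
        · exact rho_sq_le_exp_mul_rho (by linarith) (by positivity) h
        · exact (mul_pos (exp_pos _) (exp_pos _)).le
    _ = (exp (-(π / 2)) * zmodGaussSum q (π / σ ^ 2)) ^ m := by
        rw [← mul_sum, mul_pow, ← exp_nat_mul]
        simp only [rho_eq_exp, sum_exp_neg_mul_sum_zrep_sq]
        ring_nf
    _ ≤ (4 / 5 * zmodGaussSum q (2 * π / σ ^ 2)) ^ m :=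
        pow_le_pow_left₀ (mul_nonneg (exp_pos _).le (sum_nonneg fun _ _ => (exp_pos _).le))
          (exp_neg_pi_div_two_mul_zmodGaussSum_le hσ hσq) m
    _ = _ := by simp only [mul_pow, rho_sq_eq_exp, sum_exp_neg_mul_sum_zrep_sq]

lemma one_sub_sq_inner_div_truncation {α : Type*} [Fintype α] (p : α → Prop) [DecidablePred p]
    (f : α → ℝ) (hp : 0 < ∑ x, (if p x then f x else 0) ^ 2) :
    1 - ((∑ x, f x * (if p x then f x else 0)) /
        (√(∑ x, f x ^ 2) * √(∑ x, (if p x then f x else 0) ^ 2))) ^ 2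
      = (∑ x, if ¬p x then f x ^ 2 else 0) / ∑ x, f x ^ 2 := by
  set T := ∑ x, (if p x then f x else 0) ^ 2
  have hinner : ∑ x, f x * (if p x then f x else 0) = T :=
    sum_congr rfl fun x _ => by split_ifs <;> ring
  have hsplit : ∑ x, f x ^ 2 = T + ∑ x, if ¬p x then f x ^ 2 else 0 := by
    rw [← sum_add_distrib]
    exact sum_congr rfl fun x _ => by split_ifs <;> ring
  have hS : 0 < ∑ x, f x ^ 2 := by
    rw [hsplit]
    exact add_pos_of_pos_of_nonneg hp (sum_nonneg fun x _ => by split_ifs <;> positivity)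
  rw [hinner, div_pow, mul_pow, sq_sqrt hS.le, sq_sqrt hp.le]
  field_simp
  linarith

lemma sum_psiTrunc_sq_pos {q m : ℕ} [NeZero q] {σ : ℝ} (hσ : 0 ≤ σ) :
    0 < ∑ x : Fin m → ZMod q, psiTrunc σ x ^ 2 := by
  refine sum_pos' (fun x _ => sq_nonneg _) ⟨0, mem_univ _, ?_⟩
  have hz : zrep (0 : Fin m → ZMod q) = 0 := funext fun i => by simp [zrep]
  rw [psiTrunc, hz, if_pos (by simpa using mul_nonneg hσ (sqrt_nonneg ((m : ℝ) / 2)))]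
  exact pow_pos (exp_pos _) 2

lemma eventually_pow_le_rpow_neg {r : ℝ} (hr0 : 0 < r) (hr1 : r < 1) (c : ℝ) :
    ∀ᶠ m : ℕ in Filter.atTop, r ^ m ≤ (m : ℝ) ^ (-c) := by
  have hb : 0 < -log r := neg_pos.2 (log_neg hr0 hr1)
  have hlim := (tendsto_rpow_mul_exp_neg_mul_atTop_nhds_zero c _ hb).comp
    tendsto_natCast_atTop_atTop
  filter_upwards [hlim.eventually (eventually_le_nhds one_pos),
    Filter.eventually_gt_atTop 0] with m hm hm0
  have hpow : r ^ m = exp (-(-log r) * m) := by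
    conv_lhs => rw [← exp_log hr0, ← exp_nat_mul]
    ring_nf
  have hmc : 0 < (m : ℝ) ^ c := by positivity
  rw [hpow, rpow_neg m.cast_nonneg, ← one_div, le_div_iff₀ hmc, mul_comm]
  exact hm

/-- for every `c > 0` there is `M` such that for all `m ≥ M`, `q ≥ 2` and
`σ ∈ (√(2m), q/√(2m))`:
`(Σ_{x ∈ ℤ_q^m, ‖x‖ > σ√(m/2)} ρ_σ(x)²) / (Σ_{x ∈ ℤ_q^m} ρ_σ(x)²) ≤ m^(-c)`, and
consequently the normalized Gaussian state `ψ = Σ_x ρ_σ(x)|x⟩/‖·‖₂` is within trace distance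
`m^(-c/2)` (hence negligible in `m`) of its normalized truncation to
`{x ∈ ℤ_q^m : ‖x‖ ≤ σ√(m/2)}`. -/
theorem stmt_9 :
    ∀ c : ℝ, 0 < c → ∃ M : ℕ, ∀ m : ℕ, M ≤ m →
      ∀ (q : ℕ) [NeZero q], 2 ≤ q →
      ∀ σ : ℝ, Real.sqrt (2 * m) < σ → σ < q / Real.sqrt (2 * m) →
      ((∑ x : Fin m → ZMod q,
          if σ * Real.sqrt ((m : ℝ) / 2) < Real.sqrt (∑ i, (zrep x i) ^ 2)
          then rho σ (zrep x) ^ 2 else 0) /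
        (∑ x : Fin m → ZMod q, rho σ (zrep x) ^ 2) ≤ (m : ℝ) ^ (-c))
      ∧ Real.sqrt (1 -
          ((∑ x : Fin m → ZMod q, rho σ (zrep x) * psiTrunc σ x) /
            (Real.sqrt (∑ x : Fin m → ZMod q, rho σ (zrep x) ^ 2) *
              Real.sqrt (∑ x : Fin m → ZMod q, psiTrunc σ x ^ 2))) ^ 2)
          ≤ (m : ℝ) ^ (-c / 2) := by
  intro c _
  obtain ⟨M, hM⟩ := Filter.eventually_atTop.1 ((eventually_pow_le_rpow_neg (r := 4 / 5)
    (by norm_num) (by norm_num) c).and (Filter.eventually_ge_atTop 1250))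
  refine ⟨M, fun m hm q _ _ σ hσ hσq => ?_⟩
  obtain ⟨hpow, hm1250⟩ := hM m hm
  have h50 : 50 ≤ √(2 * m) := le_sqrt_of_sq_le (by
    have : (1250 : ℝ) ≤ m := by exact_mod_cast hm1250
    linarith)
  have hσ50 : 50 ≤ σ := h50.trans hσ.le
  have hratio := (sum_tail_rho_sq_div_le hσ50
    (hσq.trans_le (div_le_self q.cast_nonneg (by linarith)))).trans hpow
  refine ⟨hratio, ?_⟩
  have hcentre := sum_psiTrunc_sq_pos (q := q) (m := m) (by linarith : 0 ≤ σ)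
  unfold psiTrunc at hcentre ⊢
  rw [one_sub_sq_inner_div_truncation _ (fun x => rho σ (zrep x)) hcentre]
  simp only [not_le]
  calc _ ≤ √((m : ℝ) ^ (-c)) := sqrt_le_sqrt hratio
    _ = (m : ℝ) ^ (-c / 2) := by rw [sqrt_eq_rpow, ← rpow_mul m.cast_nonneg]; ring_nf
end

section
/- Let q ≥ 2, N, n, m, w ∈ ℕ, and let there be given integer matrices A_i ∈ ℤ^(w×m) for i ∈ {0, 1, …, N}, D_{i,b} ∈ ℤ^(m×m) and G_{i,b} ∈ ℤ^(w×w) and E_{i,b} ∈ ℤ^(w×m) for i ∈ {1, …, N} and b ∈ {0,1}, together with bounds d, g, e ≥ 0 such that for all i, b: every entry of D_{i,b} has absolute value at most d, every entry of G_{i,b} has absolute value at most g, every entry of E_{i,b} has absolute value at most e, and A_{i−1}·D_{i,b} ≡ G_{i,b}·A_i + E_{i,b} (mod q). Then for every x ∈ {0,1}^N there exists an integer matrix E_x ∈ ℤ^(w×m) with every entry of absolute value at most N·e·(max(m·d, w·g))^(N−1) such that A_0·D_x ≡ G_x·A_N + E_x (mod q), where D_x = D_{1,x₁}·⋯·D_{N,x_N}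 and G_x = G_{1,x₁}·⋯·G_{N,x_N} are the ordered subset products. -/
/-!
Substituting `A₀ D₁ ≡ G₁ A₁ + E₁` and then the congruence `A₁ D₂⋯D_N ≡ G₂⋯G_N A_N + E'` of the
shorter chain gives `A₀ D_x ≡ G_x A_N + E_x` with `E_x = E₁ D₂⋯D_N + G₁ E'`. An entry of
`E₁ D₂⋯D_N` is at most `e (m d)^(N-1)`, and multiplying `E'` by `G₁` costs a factor `w g`,
so each of the `N` layers contributes at most `e · max(m d, w g)^(N-1)`.
-/

section AccumulatedError

variable {R : Type*} [Semiring R] {k l : Type*} [Fintype k] [Fintype l]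
  [DecidableEq k] [DecidableEq l]

/-- In closed form this is `∑ i, G₀ ⋯ G_{i-1} * E i * D_{i+1} ⋯ D_{N-1}`. -/
def accumulatedError :
    {N : ℕ} → (Fin N → Matrix l l R) → (Fin N → Matrix k k R) → (Fin N → Matrix k l R) →
      Matrix k l R
  | 0, _, _, _ => 0
  | _ + 1, D, G, E =>
      E 0 * (List.ofFn fun i => D i.succ).prod +
        G 0 * accumulatedError (fun i => D i.succ) (fun i => G i.succ) (fun i => E i.succ)

theorem map_mul_prod_ofFn_eq_add_accumulatedError {S : Type*} [Semiring S] (f : R →+* S)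
    {N : ℕ} (A : Fin (N + 1) → Matrix k l R) (D : Fin N → Matrix l l R) (G : Fin N → Matrix k k R)
    (E : Fin N → Matrix k l R)
    (h : ∀ i, (A i.castSucc * D i).map f = (G i * A i.succ + E i).map f) :
    (A 0 * (List.ofFn D).prod).map f =
      ((List.ofFn G).prod * A (Fin.last N) + accumulatedError D G E).map f := by
  induction N with
  | zero => simp [accumulatedError, Fin.last]
  | succ N ih =>
    have hadd : ∀ X Y : Matrix k l R, (X + Y).map f = X.map f + Y.map f :=
      Matrix.map_add f (map_add f)
    have htail := ih (fun i => A i.succ) (fun i => D i.succ) (fun i => G i.succ)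
      (fun i => E i.succ) (fun i => by simpa only [Fin.succ_castSucc] using h i.succ)
    have hhead := h 0
    rw [Fin.succ_last] at htail
    simp only [List.ofFn_succ, List.prod_cons, accumulatedError, Matrix.map_mul, hadd,
      Fin.castSucc_zero, Fin.succ_zero_eq_one] at htail hhead ⊢
    rw [← Matrix.mul_assoc, hhead, Matrix.add_mul, Matrix.mul_assoc, htail, Matrix.mul_add,
      Matrix.mul_assoc]
    abel

end AccumulatedError

section EntryBounds

variable {k l n : Type*}

theorem abs_mul_apply_le [Fintype n] {X : Matrix k n ℤ} {Y : Matrix n l ℤ} {b b' : ℝ}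
    (hb : 0 ≤ b) (hX : ∀ a c, |(X a c : ℝ)| ≤ b) (hY : ∀ a c, |(Y a c : ℝ)| ≤ b') (a : k) (c : l) :
    |((X * Y) a c : ℝ)| ≤ Fintype.card n * b * b' := by
  calc |((X * Y) a c : ℝ)| = |∑ j, (X a j : ℝ) * Y j c| := by
        simp only [Matrix.mul_apply, Int.cast_sum, Int.cast_mul]
    _ ≤ ∑ j, |(X a j : ℝ) * Y j c| := Finset.abs_sum_le_sum_abs _ _
    _ ≤ ∑ _j : n, b * b' := Finset.sum_le_sum fun j _ => by
        rw [abs_mul]; exact mul_le_mul (hX a j) (hY j c) (abs_nonneg _) hb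
    _ = Fintype.card n * b * b' := by simp [mul_assoc]

theorem abs_mul_list_prod_apply_le [Fintype l] [DecidableEq l] {X : Matrix k l ℤ}
    {L : List (Matrix l l ℤ)} {b d : ℝ}
    (hb : 0 ≤ b) (hd : 0 ≤ d) (hX : ∀ a c, |(X a c : ℝ)| ≤ b)
    (hL : ∀ Y ∈ L, ∀ a c, |(Y a c : ℝ)| ≤ d) (a : k) (c : l) :
    |((X * L.prod) a c : ℝ)| ≤ b * (Fintype.card l * d) ^ L.length := by
  induction L generalizing X b with
  | nil => simpa using hX a c
  | cons Y L ih =>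
    have hXY := abs_mul_apply_le hb hX (hL Y List.mem_cons_self)
    rw [List.prod_cons, ← Matrix.mul_assoc, List.length_cons, pow_succ']
    calc |((X * Y * L.prod) a c : ℝ)|
        ≤ Fintype.card l * b * d * (Fintype.card l * d) ^ L.length :=
          ih (by positivity) hXY fun Z hZ => hL Z (List.mem_cons_of_mem Y hZ)
      _ = _ := by ring

end EntryBounds

theorem natCast_mul_pow_pred_mul (N : ℕ) (M : ℝ) : (N : ℝ) * M ^ (N - 1) * M = N * M ^ N := by
  cases N with
  | zero => simp
  | succ N => rw [Nat.add_sub_cancel, mul_assoc, ← pow_succ]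

theorem abs_accumulatedError_apply_le {k l : Type*} [Fintype k] [Fintype l] [DecidableEq k]
    [DecidableEq l] {N : ℕ} (D : Fin N → Matrix l l ℤ) (G : Fin N → Matrix k k ℤ)
    (E : Fin N → Matrix k l ℤ) {d g e : ℝ} (hd : 0 ≤ d) (hg : 0 ≤ g) (he : 0 ≤ e)
    (hD : ∀ i a c, |(D i a c : ℝ)| ≤ d) (hG : ∀ i a c, |(G i a c : ℝ)| ≤ g)
    (hE : ∀ i a c, |(E i a c : ℝ)| ≤ e) (a : k) (c : l) :
    |((accumulatedError D G E a c : ℤ) : ℝ)| ≤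
      N * e * max (Fintype.card l * d) (Fintype.card k * g) ^ (N - 1) := by
  induction N generalizing a c with
  | zero => simp [accumulatedError]
  | succ N ih =>
    set M := max (Fintype.card l * d) (Fintype.card k * g)
    have hM : 0 ≤ M := le_max_of_le_left (by positivity)
    have hfirst : |((E 0 * (List.ofFn fun i => D i.succ).prod) a c : ℝ)| ≤ e * M ^ N := by
      have := abs_mul_list_prod_apply_le he hd (hE 0)
        (L := List.ofFn fun i : Fin N => D i.succ)
        (by simpa [List.mem_ofFn] using fun i : Fin N => hD i.succ) a c
      rw [List.length_ofFn] at this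
      exact this.trans (by gcongr; exact le_max_left _ _)
    have hrest := abs_mul_apply_le hg (hG 0)
      (ih (fun i => D i.succ) (fun i => G i.succ) (fun i => E i.succ)
        (fun i => hD i.succ) (fun i => hG i.succ) (fun i => hE i.succ)) a c
    calc |((accumulatedError D G E a c : ℤ) : ℝ)|
        ≤ e * M ^ N + Fintype.card k * g * (N * e * M ^ (N - 1)) := by
          simp only [accumulatedError, Matrix.add_apply, Int.cast_add]
          exact (abs_add_le _ _).trans (add_le_add hfirst hrest)
      _ ≤ e * M ^ N + M * (N * e * M ^ (N - 1)) := by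
          gcongr; exact le_max_right _ _
      _ = (N + 1 : ℕ) * e * M ^ (N + 1 - 1) := by
          rw [Nat.add_sub_cancel]; push_cast
          linear_combination e * natCast_mul_pow_pred_mul N M

theorem map_intCast_eq_map_intCast_iff {k l : Type*} (q : ℕ) (X Y : Matrix k l ℤ) :
    X.map (Int.castRingHom (ZMod q)) = Y.map (Int.castRingHom (ZMod q)) ↔
      ∀ a c, X a c ≡ Y a c [ZMOD q] := by
  simp only [← Matrix.ext_iff, Matrix.map_apply, eq_intCast, ZMod.intCast_eq_intCast_iff]

theorem stmt_12_general (q : ℕ) (N m w : ℕ)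
    (A : Fin (N + 1) → Matrix (Fin w) (Fin m) ℤ)
    (D : Fin N → Bool → Matrix (Fin m) (Fin m) ℤ)
    (G : Fin N → Bool → Matrix (Fin w) (Fin w) ℤ)
    (E : Fin N → Bool → Matrix (Fin w) (Fin m) ℤ)
    (d g e : ℝ) (hd : 0 ≤ d) (hg : 0 ≤ g) (he : 0 ≤ e)
    (hD : ∀ i b a c, (|D i b a c| : ℝ) ≤ d)
    (hG : ∀ i b a c, (|G i b a c| : ℝ) ≤ g)
    (hE : ∀ i b a c, (|E i b a c| : ℝ) ≤ e)
    (hcong : ∀ (i : Fin N) (b : Bool) (a : Fin w) (c : Fin m),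
      (A i.castSucc * D i b) a c ≡ (G i b * A i.succ + E i b) a c [ZMOD (q : ℤ)]) :
    ∀ x : Fin N → Bool,
      ∃ Ex : Matrix (Fin w) (Fin m) ℤ,
        (∀ a c, (|Ex a c| : ℝ) ≤
          N * e * (max ((m : ℝ) * d) ((w : ℝ) * g)) ^ (N - 1)) ∧
        ∀ a c,
          (A 0 * (List.ofFn fun i => D i (x i)).prod) a c ≡
            ((List.ofFn fun i => G i (x i)).prod * A (Fin.last N) + Ex) a c
            [ZMOD (q : ℤ)] := by
  intro x
  refine ⟨accumulatedError (fun i => D i (x i)) (fun i => G i (x i)) (fun i => E i (x i)),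
    fun a c => ?_, ?_⟩
  · simpa only [Fintype.card_fin] using abs_accumulatedError_apply_le _ _ _ hd hg he
      (fun i => hD i (x i)) (fun i => hG i (x i)) (fun i => hE i (x i)) a c
  · rw [← map_intCast_eq_map_intCast_iff]
    exact map_mul_prod_ofFn_eq_add_accumulatedError _ A _ _ _ fun i =>
      (map_intCast_eq_map_intCast_iff q _ _).mpr (hcong i (x i))

/-- GGH15 error accumulation: given integer matrices
`A_i ∈ ℤ^(w×m)` (`i = 0,…,N`), `D_{i,b} ∈ ℤ^(m×m)`, `G_{i,b} ∈ ℤ^(w×w)`,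
`E_{i,b} ∈ ℤ^(w×m)` with entrywise bounds `d, g, e ≥ 0` and
`A_{i-1}·D_{i,b} ≡ G_{i,b}·A_i + E_{i,b} (mod q)`, for every `x ∈ {0,1}^N` there is
`E_x ∈ ℤ^(w×m)` with entries bounded by `N·e·(max(m·d, w·g))^(N-1)` such that
`A_0·D_x ≡ G_x·A_N + E_x (mod q)`, where `D_x`, `G_x` are ordered subset products. -/
theorem stmt_12 (q : ℕ) (hq : 2 ≤ q) (N n m w : ℕ)
    (A : Fin (N + 1) → Matrix (Fin w) (Fin m) ℤ)
    (D : Fin N → Bool → Matrix (Fin m) (Fin m) ℤ)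
    (G : Fin N → Bool → Matrix (Fin w) (Fin w) ℤ)
    (E : Fin N → Bool → Matrix (Fin w) (Fin m) ℤ)
    (d g e : ℝ) (hd : 0 ≤ d) (hg : 0 ≤ g) (he : 0 ≤ e)
    (hD : ∀ i b a c, (|D i b a c| : ℝ) ≤ d)
    (hG : ∀ i b a c, (|G i b a c| : ℝ) ≤ g)
    (hE : ∀ i b a c, (|E i b a c| : ℝ) ≤ e)
    (hcong : ∀ (i : Fin N) (b : Bool) (a : Fin w) (c : Fin m),
      (A i.castSucc * D i b) a c ≡ (G i b * A i.succ + E i b) a c [ZMOD (q : ℤ)]) :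
    ∀ x : Fin N → Bool,
      ∃ Ex : Matrix (Fin w) (Fin m) ℤ,
        (∀ a c, (|Ex a c| : ℝ) ≤
          N * e * (max ((m : ℝ) * d) ((w : ℝ) * g)) ^ (N - 1)) ∧
        ∀ a c,
          (A 0 * (List.ofFn fun i => D i (x i)).prod) a c ≡
            ((List.ofFn fun i => G i (x i)).prod * A (Fin.last N) + Ex) a c
            [ZMOD (q : ℤ)] :=
  stmt_12_general q N m w A D G E d g e hd hg he hD hG hE hcong
end
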